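/- arXiv:2602.10141 — 3 statements merged into one kernel-verified Lean document; each statement's English description precedes it below -/
import Mathlib

section
/- Let U be an n×n complex unitary matrix (U U* = I). Then |perm(U)| ≤ 1. -/
/-!
Expanding `perm (A * Aᴴ)` multiplies out each entry of `A * Aᴴ`, producing a sum over all maps
`f : n → m`, not only bijections, of `perm (A.submatrix id f)` times the conjugate of a single
diagonal product. Since `perm (A.submatrix id f)` does not change when `f` is precomposed with a
permutation, averaging over the permutations turns that diagonal product into
`perm (A.submatrix id f)` itself, so `n! • perm (A * Aᴴ) = ∑ f, |perm (A.submatrix id f)|²`.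
The `n!` bijective `f` each contribute `|perm A|²`, hence `|perm A|² ≤ perm (A * Aᴴ)`, which is
`perm 1 = 1` for a unitary `A`.
-/

open Matrix Finset Equiv

namespace Matrix

variable {n m R : Type*} [Fintype n] [DecidableEq n]

theorem permanent_submatrix_comp_perm [CommSemiring R] (A : Matrix n m R) (f : n → m)
    (τ : Perm n) : (A.submatrix id (f ∘ τ)).permanent = (A.submatrix id f).permanent :=
  permanent_permute_rows τ (A.submatrix id f)

theorem permanent_submatrix_eq_sum_prod [CommSemiring R] (A : Matrix n m R) (f : n → m) :
    (A.submatrix id f).permanent = ∑ σ : Perm n, ∏ i, A i (f (σ i)) := by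
  rw [← permanent_transpose]
  rfl

variable [Fintype m]

theorem permanent_mul_eq_sum_submatrix [CommSemiring R] (A : Matrix n m R) (B : Matrix m n R) :
    (A * B).permanent = ∑ f : n → m, (A.submatrix id f).permanent * ∏ i, B (f i) i := by
  simp only [permanent, mul_apply, Fintype.prod_sum, Finset.sum_mul, submatrix_apply, id,
    ← Finset.prod_mul_distrib]
  exact Finset.sum_comm

theorem card_perm_smul_permanent_mul_conjTranspose [CommSemiring R] [StarRing R]
    (A : Matrix n m R) :
    Fintype.card (Perm n) • (A * Aᴴ).permanent =
      ∑ f : n → m, (A.submatrix id f).permanent * star (A.submatrix id f).permanent := by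
  have hshift (τ : Perm n) :
      ∑ f : n → m, (A.submatrix id f).permanent * star (∏ i, A i (f i)) =
        ∑ f : n → m, (A.submatrix id f).permanent * star (∏ i, A i (f (τ i))) := by
    refine Fintype.sum_equiv (Equiv.arrowCongr τ (Equiv.refl m)) _ _ fun f => ?_
    change _ = (A.submatrix id (f ∘ τ.symm)).permanent * star (∏ i, A i (f (τ.symm (τ i))))
    simp only [permanent_submatrix_comp_perm, Equiv.symm_apply_apply]
  calc Fintype.card (Perm n) • (A * Aᴴ).permanent
      = ∑ τ : Perm n, ∑ f : n → m,
          (A.submatrix id f).permanent * star (∏ i, A i (f (τ i))) := by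
        simp only [permanent_mul_eq_sum_submatrix, conjTranspose_apply, ← star_prod, ← hshift,
          Finset.sum_const, Finset.card_univ]
    _ = ∑ f : n → m, (A.submatrix id f).permanent * star (A.submatrix id f).permanent := by
        rw [Finset.sum_comm]
        simp only [← Finset.mul_sum, ← star_sum, permanent_submatrix_eq_sum_prod]

omit [Fintype m] in
theorem sq_norm_permanent_le_re_permanent_mul_conjTranspose {𝕜 : Type*} [RCLike 𝕜]
    (A : Matrix n n 𝕜) : ‖A.permanent‖ ^ 2 ≤ RCLike.re (A * Aᴴ).permanent := by
  have hsum := congrArg RCLike.re (card_perm_smul_permanent_mul_conjTranspose A)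
  rw [nsmul_eq_mul, ← RCLike.ofReal_natCast, RCLike.re_ofReal_mul] at hsum
  simp only [RCLike.star_def, RCLike.mul_conj, map_sum, ← RCLike.ofReal_pow,
    RCLike.ofReal_re] at hsum
  have hcard : (0 : ℝ) < Fintype.card (Perm n) := by exact_mod_cast Fintype.card_pos
  refine le_of_mul_le_mul_left ?_ hcard
  calc (Fintype.card (Perm n) : ℝ) * ‖A.permanent‖ ^ 2
      = ∑ σ : Perm n, ‖(A.submatrix id σ).permanent‖ ^ 2 := by
        simp [permanent_permute_rows]
    _ ≤ ∑ f : n → n, ‖(A.submatrix id f).permanent‖ ^ 2 :=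
        (Finset.sum_map univ ⟨fun σ : Perm n => (σ : n → n), DFunLike.coe_injective⟩
          fun f => ‖(A.submatrix id f).permanent‖ ^ 2).symm.le.trans
          (Finset.sum_le_univ_sum_of_nonneg fun f => by positivity)
    _ = Fintype.card (Perm n) * RCLike.re (A * Aᴴ).permanent := hsum.symm

end Matrix

/-- The permanent of a unitary matrix has absolute value at most 1. -/
theorem abs_permanent_le_one_of_unitary {n : ℕ} (U : Matrix (Fin n) (Fin n) ℂ)
    (hU : U * Uᴴ = 1) :
    ‖U.permanent‖ ≤ 1 := by
  have h := sq_norm_permanent_le_re_permanent_mul_conjTranspose U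
  rw [hU, permanent_one, RCLike.one_re] at h
  exact (sq_le_one_iff₀ (norm_nonneg _)).mp h
end

section
/- For every positive integer n, |perm(S_n)| ≤ n^{n/2}, where S_n is the Schur matrix. -/
/-- The Schur matrix: `(S_n)_{jk} = e^{2πi jk/n}` for `0 ≤ j,k ≤ n-1`. -/
noncomputable def schurMatrix (n : ℕ) : Matrix (Fin n) (Fin n) ℂ :=
  Matrix.of fun j k : Fin n =>
    Complex.exp (2 * (Real.pi : ℂ) * Complex.I * ((j : ℕ) : ℂ) * ((k : ℕ) : ℂ) / (n : ℂ))

/-!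
Write `A_f` for the matrix whose `i`-th row is row `f i` of `A`, for any `f : ι → ι`. Expanding
`perm (A_f) = ∑_σ ∏_i A (f i) (σ i)` and summing `|perm (A_f)|²` over all `f` factorises the sum over
`f` into a product over `i`, which gives `∑_f |perm (A_f)|² = n! · perm (Aᴴ A)`. The `n!` terms with
`f` a permutation all equal `|perm A|²`, so `|perm A|² ≤ perm (Aᴴ A)`. The Schur matrix is the
Vandermonde matrix of an `n`-th root of unity, hence `Sᴴ S = n · 1` and `|perm S|² ≤ nⁿ`.
-/

open Finset Equiv ComplexConjugate Nat Matrix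

namespace Matrix

variable {m n : Type*} [Fintype n] [DecidableEq n]

theorem permanent_submatrix_eq_sum {R : Type*} [CommSemiring R] (A : Matrix m n R) (f : n → m) :
    (A.submatrix f id).permanent = ∑ σ : Perm n, ∏ i, A (f i) (σ i) := by
  rw [← permanent_transpose]
  rfl

variable {𝕜 : Type*} [RCLike 𝕜] [Fintype m]

theorem sum_prod_mul_conj_prod (A : Matrix m n 𝕜) (σ τ : n → n) :
    ∑ f : n → m, (∏ i, A (f i) (σ i)) * conj (∏ i, A (f i) (τ i)) =
      ∏ i, (Aᴴ * A) (τ i) (σ i) := by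
  simp only [map_prod, ← prod_mul_distrib, mul_apply, conjTranspose_apply, RCLike.star_def]
  rw [Fintype.prod_sum]
  simp only [mul_comm]

theorem sum_norm_permanent_submatrix_sq (A : Matrix m n 𝕜) :
    ∑ f : n → m, ((‖(A.submatrix f id).permanent‖ ^ 2 : ℝ) : 𝕜) =
      (Fintype.card n)! * (Aᴴ * A).permanent := by
  have hrow (τ : Perm n) : ∑ σ : Perm n, ∏ i, (Aᴴ * A) (τ i) (σ i) = (Aᴴ * A).permanent := by
    rw [← permanent_submatrix_eq_sum, permanent_permute_cols]
  calc ∑ f : n → m, ((‖(A.submatrix f id).permanent‖ ^ 2 : ℝ) : 𝕜)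
      = ∑ f : n → m, ∑ σ : Perm n, ∑ τ : Perm n,
          (∏ i, A (f i) (σ i)) * conj (∏ i, A (f i) (τ i)) := by
        simp only [RCLike.ofReal_pow, ← RCLike.mul_conj, permanent_submatrix_eq_sum, map_sum,
          sum_mul_sum]
    _ = ∑ τ : Perm n, ∑ σ : Perm n, ∏ i, (Aᴴ * A) (τ i) (σ i) := by
        rw [sum_comm]
        simp only [sum_comm (γ := n → m), sum_prod_mul_conj_prod]
        exact sum_comm
    _ = (Fintype.card n)! * (Aᴴ * A).permanent := by
        simp [hrow, Fintype.card_perm]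

theorem norm_permanent_sq_le (A : Matrix n n 𝕜) :
    ‖A.permanent‖ ^ 2 ≤ RCLike.re (Aᴴ * A).permanent := by
  have hsum := congrArg RCLike.re (sum_norm_permanent_submatrix_sq A)
  rw [← RCLike.ofReal_natCast, RCLike.re_ofReal_mul, map_sum] at hsum
  simp only [RCLike.ofReal_re] at hsum
  have hperm : ∑ σ : Perm n, ‖(A.submatrix σ id).permanent‖ ^ 2 =
      (Fintype.card n)! * ‖A.permanent‖ ^ 2 := by
    simp [permanent_permute_cols, Fintype.card_perm]
  have hle : ∑ σ : Perm n, ‖(A.submatrix σ id).permanent‖ ^ 2 ≤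
      ∑ f : n → n, ‖(A.submatrix f id).permanent‖ ^ 2 :=
    (sum_map univ (⟨(⇑), coe_fn_injective⟩ : Perm n ↪ (n → n))
        fun f ↦ ‖(A.submatrix f id).permanent‖ ^ 2).symm.trans_le
      (sum_le_univ_sum_of_nonneg fun _ ↦ by positivity)
  rw [hperm, hsum] at hle
  exact le_of_mul_le_mul_left hle (mod_cast factorial_pos _)

end Matrix

theorem geom_sum_eq_ite_of_pow_eq_one {K : Type*} [Field K] [DecidableEq K] {x : K} {n : ℕ}
    (hx : x ^ n = 1) : ∑ i ∈ range n, x ^ i = if x = 1 then (n : K) else 0 := by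
  split_ifs with h
  · simp [h]
  · rw [geom_sum_eq h, hx, sub_self, zero_div]

theorem IsPrimitiveRoot.conjTranspose_vandermonde_mul_self {ζ : ℂ} {n : ℕ}
    (hζ : IsPrimitiveRoot ζ n) :
    (vandermonde fun i : Fin n ↦ ζ ^ (i : ℕ))ᴴ * vandermonde (fun i : Fin n ↦ ζ ^ (i : ℕ)) =
      (n : ℂ) • 1 := by
  ext j k
  have hζ0 : ζ ≠ 0 := hζ.ne_zero j.pos.ne'
  have hconj : conj ζ = ζ⁻¹ :=
    (Complex.inv_eq_conj (Complex.norm_eq_one_of_pow_eq_one hζ.pow_eq_one j.pos.ne')).symm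
  have hxn : (ζ ^ (k : ℕ) / ζ ^ (j : ℕ)) ^ n = 1 := by
    rw [div_pow, ← pow_mul, ← pow_mul, pow_mul', pow_mul' ζ j, hζ.pow_eq_one, one_pow, one_pow,
      div_one]
  have hratio_eq_one : ζ ^ (k : ℕ) / ζ ^ (j : ℕ) = 1 ↔ j = k := by
    rw [div_eq_one_iff_eq (pow_ne_zero _ hζ0), eq_comm, Fin.ext_iff]
    exact ⟨fun h ↦ hζ.pow_inj j.isLt k.isLt h, fun h ↦ h ▸ rfl⟩
  have hterm (i : Fin n) : star ((ζ ^ (i : ℕ)) ^ (j : ℕ)) * (ζ ^ (i : ℕ)) ^ (k : ℕ) =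
      (ζ ^ (k : ℕ) / ζ ^ (j : ℕ)) ^ (i : ℕ) := by
    rw [RCLike.star_def, map_pow, map_pow, hconj]
    ring
  rw [mul_apply]
  simp only [conjTranspose_apply, vandermonde_apply, hterm]
  rw [Fin.sum_univ_eq_sum_range (fun i ↦ (ζ ^ (k : ℕ) / ζ ^ (j : ℕ)) ^ i),
    geom_sum_eq_ite_of_pow_eq_one hxn]
  simp [hratio_eq_one, one_apply]

theorem schurMatrix_eq_vandermonde (n : ℕ) :
    schurMatrix n =
      vandermonde fun i : Fin n ↦ Complex.exp (2 * Real.pi * Complex.I / n) ^ (i : ℕ) := by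
  ext j k
  rw [vandermonde_apply, ← pow_mul, ← Complex.exp_nat_mul, schurMatrix, of_apply]
  push_cast
  ring_nf

theorem schurMatrix_conjTranspose_mul_self (n : ℕ) :
    (schurMatrix n)ᴴ * schurMatrix n = (n : ℂ) • 1 := by
  rcases eq_or_ne n 0 with rfl | hn
  · exact Subsingleton.elim _ _
  rw [schurMatrix_eq_vandermonde]
  exact (Complex.isPrimitiveRoot_exp n hn).conjTranspose_vandermonde_mul_self

theorem abs_permanent_schur_le_general (n : ℕ) :
    ‖(schurMatrix n).permanent‖ ≤ (n : ℝ) ^ ((n : ℝ) / 2) := by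
  have hsq : ‖(schurMatrix n).permanent‖ ^ 2 ≤ (n : ℝ) ^ n := by
    have h := (schurMatrix n).norm_permanent_sq_le
    rwa [schurMatrix_conjTranspose_mul_self, permanent_smul, permanent_one, mul_one,
      Fintype.card_fin, ← Nat.cast_pow, RCLike.natCast_re, Nat.cast_pow] at h
  calc ‖(schurMatrix n).permanent‖ = √(‖(schurMatrix n).permanent‖ ^ 2) :=
        (Real.sqrt_sq (norm_nonneg _)).symm
    _ ≤ √((n : ℝ) ^ n) := Real.sqrt_le_sqrt hsq
    _ = (n : ℝ) ^ ((n : ℝ) / 2) := by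
        rw [Real.sqrt_eq_rpow, ← Real.rpow_natCast, ← Real.rpow_mul n.cast_nonneg]
        ring_nf

/-- `|perm(S_n)| ≤ n^{n/2}` for the Schur matrix `S_n`. -/
theorem abs_permanent_schur_le (n : ℕ) (hn : 0 < n) :
    ‖(schurMatrix n).permanent‖ ≤ (n : ℝ) ^ ((n : ℝ) / 2) :=
  abs_permanent_schur_le_general n
end

section
/- For every positive integer n, the permanent perm(S_n) of the Schur matrix is a rational integer, i.e., perm(S_n) ∈ ℤ (as a complex number it is an integer). -/
open Polynomial

def fourierMatrix {R : Type*} [Monoid R] (ζ : R) (n : ℕ) : Matrix (Fin n) (Fin n) R :=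
  Matrix.of fun j k : Fin n => ζ ^ ((j : ℕ) * k)

theorem schurMatrix_eq_fourierMatrix (n : ℕ) :
    schurMatrix n = fourierMatrix (Complex.exp (2 * Real.pi * Complex.I / n)) n := by
  ext j k
  rw [schurMatrix, fourierMatrix, Matrix.of_apply, Matrix.of_apply, ← Complex.exp_nat_mul]
  push_cast
  ring_nf

theorem mul_mod_injective_of_coprime {n t : ℕ} (ht : t.Coprime n) :
    Function.Injective fun a : Fin n => t * a % n := by
  intro a b hab
  have hmod : (a : ℕ) ≡ b [MOD n] :=
    Nat.ModEq.cancel_left_of_coprime (Nat.coprime_comm.mp ht) hab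
  exact Fin.ext (by rwa [Nat.ModEq, Nat.mod_eq_of_lt a.isLt, Nat.mod_eq_of_lt b.isLt] at hmod)

noncomputable def mulModPerm {n t : ℕ} (hn : 0 < n) (ht : t.Coprime n) : Equiv.Perm (Fin n) :=
  Equiv.ofBijective (fun a => ⟨t * a % n, Nat.mod_lt _ hn⟩) <| Finite.injective_iff_bijective.mp
    fun _ _ h => mul_mod_injective_of_coprime ht (congrArg Fin.val h)

theorem fourierMatrix_submatrix_mulModPerm {R : Type*} [Monoid R] {ζ : R} {n t : ℕ}
    (hζ : ζ ^ n = 1) (hn : 0 < n) (ht : t.Coprime n) :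
    (fourierMatrix ζ n).submatrix (mulModPerm hn ht) id = fourierMatrix (ζ ^ t) n := by
  ext j k
  simp only [Matrix.submatrix_apply, fourierMatrix, Matrix.of_apply, id, ← pow_mul]
  refine pow_eq_pow_of_modEq ?_ hζ
  rw [← mul_assoc]
  exact (Nat.mod_modEq _ n).mul_right _

theorem permanent_fourierMatrix_pow {R : Type*} [CommSemiring R] {ζ : R} {n t : ℕ}
    (hζ : ζ ^ n = 1) (ht : t.Coprime n) :
    (fourierMatrix (ζ ^ t) n).permanent = (fourierMatrix ζ n).permanent := by
  rcases Nat.eq_zero_or_pos n with rfl | hn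
  · rw [Matrix.permanent_isEmpty, Matrix.permanent_isEmpty]
  rw [← fourierMatrix_submatrix_mulModPerm hζ hn ht, Matrix.permanent_permute_cols]

theorem IsPrimitiveRoot.permanent_fourierMatrix_eq {R : Type*} [CommRing R] [IsDomain R]
    {ζ μ : R} {n : ℕ} (hn : 0 < n) (hζ : IsPrimitiveRoot ζ n) (hμ : IsPrimitiveRoot μ n) :
    (fourierMatrix μ n).permanent = (fourierMatrix ζ n).permanent := by
  have : NeZero n := ⟨hn.ne'⟩
  obtain ⟨t, -, rfl⟩ := hζ.eq_pow_of_pow_eq_one hμ.pow_eq_one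
  exact permanent_fourierMatrix_pow hζ.pow_eq_one ((hζ.pow_iff_coprime hn t).mp hμ)

theorem aeval_permanent_fourierMatrix_X {R A : Type*} [CommSemiring R] [CommSemiring A]
    [Algebra R A] (ζ : A) (n : ℕ) :
    aeval ζ (fourierMatrix (X : R[X]) n).permanent = (fourierMatrix ζ n).permanent := by
  simp [Matrix.permanent, fourierMatrix, map_sum, map_prod]

theorem exists_algebraMap_eq_of_aeval_eq_on_primitiveRoots {R K : Type*} [CommRing R] [Field K]
    [Algebra R K] {n : ℕ} (hn : 0 < n) {ζ : K} (hζ : IsPrimitiveRoot ζ n) (P : R[X]) (c : K)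
    (hP : ∀ μ : K, IsPrimitiveRoot μ n → aeval μ P = c) :
    ∃ r : R, algebraMap R K r = c := by
  have := (algebraMap R K).domain_nontrivial
  set Q := P %ₘ cyclotomic n R
  have hdeg : (cyclotomic n R).natDegree = n.totient := natDegree_cyclotomic n R
  have hne : cyclotomic n R ≠ 1 := fun h => by
    simp [h, eq_comm, Nat.totient_eq_zero, hn.ne'] at hdeg
  have hQ : Q.map (algebraMap R K) = C c := by
    refine eq_of_natDegree_lt_card_of_eval_eq' _ _ (primitiveRoots n K) (fun μ hμ => ?_) ?_
    · have hμ := (mem_primitiveRoots hn).mp hμ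
      have hroot : aeval μ (cyclotomic n R) = 0 := by
        rw [aeval_def, eval₂_eq_eval_map, map_cyclotomic]
        exact hμ.isRoot_cyclotomic hn
      rw [eval_map_algebraMap, aeval_modByMonic_eq_self_of_root hroot, hP μ hμ, eval_C]
    · rw [hζ.card_primitiveRoots, natDegree_C, max_eq_left (Nat.zero_le _)]
      calc (Q.map (algebraMap R K)).natDegree ≤ Q.natDegree := natDegree_map_le
        _ < (cyclotomic n R).natDegree :=
          natDegree_modByMonic_lt _ (cyclotomic.monic n R) hne
        _ = n.totient := hdeg
  exact ⟨Q.coeff 0, by simpa using congrArg (coeff · 0) hQ⟩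

/-- The permanent of the Schur matrix is a rational integer. -/
theorem permanent_schur_int (n : ℕ) (hn : 0 < n) :
    ∃ m : ℤ, (schurMatrix n).permanent = (m : ℂ) := by
  have hζ := Complex.isPrimitiveRoot_exp n hn.ne'
  obtain ⟨m, hm⟩ := exists_algebraMap_eq_of_aeval_eq_on_primitiveRoots hn hζ
    (fourierMatrix (X : ℤ[X]) n).permanent (fourierMatrix _ n).permanent fun μ hμ => by
      rw [aeval_permanent_fourierMatrix_X, hζ.permanent_fourierMatrix_eq hn hμ]
  exact ⟨m, by rw [schurMatrix_eq_fourierMatrix, ← hm, eq_intCast]⟩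
end
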